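/- With the same setup (L_θ(s,a) = Q⋆(s,a) − γ V⋆(f_θ(s,a)), terminal cost V⋆, Bellman equation V⋆(s) = min_a Q⋆(s,a)), the MPC action-value function Q_θ(s,a) — defined as the optimal value of the N-horizon problem with the first action constrained to equal a — satisfies Q_θ(s,a) = Q⋆(s,a) for all s and a. -/

import Mathlib

/-- `VM fθ Lθ Vstar γ M` : the optimal M-step cost-to-go under model `fθ` with
stage cost `Lθ` and terminal cost `Vstar`. -/
noncomputable def VM {S A : Type*} [Fintype A] [Nonempty A]
    (fθ : S → A → S) (Lθ : S → A → ℝ) (Vstar : S → ℝ) (γ : ℝ) : ℕ → S → ℝ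
  | 0 => Vstar
  | M + 1 => fun s =>
      Finset.univ.inf' Finset.univ_nonempty
        (fun a => Lθ s a + γ * VM fθ Lθ Vstar γ M (fθ s a))

/-! The stage cost `Q⋆ - γ V⋆ ∘ f` makes `V⋆` a fixed point of the one-step Bellman operator
of the model, and a terminal cost that is such a fixed point is reproduced by every horizon. -/

section

variable {S A : Type*} [Fintype A] [Nonempty A] (f : S → A → S) (L : S → A → ℝ) (V : S → ℝ)
  (γ : ℝ)

theorem VM_eq_of_isBellmanFixedPoint
    (hV : ∀ s, V s = Finset.univ.inf' Finset.univ_nonempty (fun a => L s a + γ * V (f s a)))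
    (M : ℕ) : VM f L V γ M = V := by
  induction M with
  | zero => rfl
  | succ M ih =>
    funext s
    rw [VM, ih]
    exact (hV s).symm

theorem isBellmanFixedPoint_of_stageCost (Q : S → A → ℝ)
    (hV : ∀ s, V s = Finset.univ.inf' Finset.univ_nonempty (fun a => Q s a))
    (hL : ∀ s a, L s a = Q s a - γ * V (f s a)) (s : S) :
    V s = Finset.univ.inf' Finset.univ_nonempty (fun a => L s a + γ * V (f s a)) := by
  simp only [hL, sub_add_cancel, hV s]

end

theorem stmt_2_general {S A : Type*} [Fintype A] [Nonempty A]
    (fθ : S → A → S) (γ : ℝ)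
    (Vstar : S → ℝ) (Qstar : S → A → ℝ)
    (hV : ∀ s : S, Vstar s = Finset.univ.inf' Finset.univ_nonempty (fun a => Qstar s a))
    (Lθ : S → A → ℝ)
    (hLθ : ∀ s a, Lθ s a = Qstar s a - γ * Vstar (fθ s a))
    (M : ℕ) :
    ∀ (s : S) (a : A),
      Lθ s a + γ * VM fθ Lθ Vstar γ M (fθ s a) = Qstar s a := by
  intro s a
  have hfix := isBellmanFixedPoint_of_stageCost fθ Lθ Vstar γ Qstar hV hLθ
  rw [VM_eq_of_isBellmanFixedPoint fθ Lθ Vstar γ hfix, hLθ, sub_add_cancel]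

/-- the MPC action-value function
Q_θ(s,a) = L_θ(s,a) + γ V_θ^{N−1}(f_θ(s,a)) satisfies Q_θ(s,a) = Q⋆(s,a)
for all s, a (for every horizon N ≥ 1, i.e. every M = N − 1). -/
theorem stmt_2 {S A : Type*} [Fintype A] [Nonempty A]
    (fθ : S → A → S) (γ : ℝ) (hγ0 : 0 < γ) (hγ1 : γ ≤ 1)
    (Vstar : S → ℝ) (Qstar : S → A → ℝ)
    (hV : ∀ s : S, Vstar s = Finset.univ.inf' Finset.univ_nonempty (fun a => Qstar s a))
    (Lθ : S → A → ℝ)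
    (hLθ : ∀ s a, Lθ s a = Qstar s a - γ * Vstar (fθ s a))
    (M : ℕ) :
    ∀ (s : S) (a : A),
      Lθ s a + γ * VM fθ Lθ Vstar γ M (fθ s a) = Qstar s a :=
  stmt_2_general fθ γ Vstar Qstar hV Lθ hLθ M
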